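/- arXiv:2009.10120 — 2 statements merged into one kernel-verified Lean document; each statement's English description precedes it below -/
import Mathlib

section
/- Let A be a commutative ring and S ⊆ A[X] a submonoid of the multiplicative monoid of A[X] all of whose elements are monic polynomials. Let P be an A-module and f : P → P an A-linear endomorphism such that p(f) = 0 for some p ∈ S (where p(f) denotes the evaluation of p at f). Then the localization of the A[X]-module P_f at S is the zero module, and consequently the map induced on S-localizations by g : P[X] → P[X], g(m) = X·m − f̃(m), is bijective. -/
/-!
Over `A[X]` there is an exact sequence `P[X] → P[X] → P_f`, the first map `X - f̃` and the second
`Σ Xⁱ mᵢ ↦ Σ fⁱ mᵢ`; the first map is injective because `X` raises the top coefficient of an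
element of `P[X]` one degree above anything `f̃` can reach. Since `p ∈ S` kills `P_f`, the
localization of `P_f` at `S` vanishes, and exactness of localization makes `X - f̃` bijective
after localizing.
-/

open Polynomial

namespace PolynomialModule

variable {A : Type*} [CommRing A] {P : Type*} [AddCommGroup P] [Module A P] (f : P →ₗ[A] P)

noncomputable def toAEval' : PolynomialModule A P →ₗ[A[X]] Module.AEval' f :=
  LinearMap.liftBaseChange A[X] (Module.AEval'.of f).toLinearMap ∘ₗ
    (polynomialTensorProductLEquivPolynomialModule A P).symm.toLinearMap

lemma toAEval'_single (i : ℕ) (m : P) :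
    toAEval' f (single A i m) = Module.AEval'.of f ((f ^ i) m) := by
  simp [toAEval', polynomialTensorProductLEquivPolynomialModule, Module.AEval'.X_pow_smul_of]

lemma toAEval'_map (q : PolynomialModule A P) :
    toAEval' f (map A f q) = (X : A[X]) • toAEval' f q := by
  induction q using induction_linear with
  | zero => simp
  | add a b ha hb => rw [map_add, map_add, ha, hb, map_add, smul_add]
  | single i m =>
    rw [map_single, toAEval'_single, toAEval'_single, Module.AEval'.X_smul_of,
      ← Module.End.mul_apply, ← pow_succ, pow_succ', Module.End.mul_apply]

noncomputable def xSubMap : PolynomialModule A P →ₗ[A[X]] PolynomialModule A P where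
  toFun m := (X : A[X]) • m - map A f m
  map_add' m n := by simp only [smul_add, map_add]; abel
  map_smul' p m := by
    simp only [map_smul, Polynomial.map_id, Algebra.algebraMap_self, RingHom.id_apply, smul_sub,
      smul_comm p (X : A[X])]

lemma xSubMap_apply (q : PolynomialModule A P) :
    xSubMap f q = (X : A[X]) • q - map A f q := rfl

lemma xSubMap_single (i : ℕ) (m : P) :
    xSubMap f (single A i m) = single A (i + 1) m - single A i (f m) := by
  rw [xSubMap_apply, map_single, ← monomial_one_one_eq_X, monomial_smul_single, one_smul,
    add_comm]

lemma toAEval'_comp_xSubMap : toAEval' f ∘ₗ xSubMap f = 0 := by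
  ext1 q
  simp [xSubMap_apply, toAEval'_map]

lemma coeff_xSubMap_succ (q : PolynomialModule A P) (n : ℕ) :
    (xSubMap f q).coeff (n + 1) = q.coeff n - f (q.coeff (n + 1)) := by
  change (X • q).coeff (n + 1) - (map A f q).coeff (n + 1) = _
  rw [← monomial_one_one_eq_X, monomial_smul_apply]
  simp [map]

lemma xSubMap_injective : Function.Injective (xSubMap f) := by
  rw [← LinearMap.ker_eq_bot, LinearMap.ker_eq_bot']
  intro q hq
  by_contra hne
  have hsupp : q.coeff.support.Nonempty := by simpa using hne
  set n := q.coeff.support.max' hsupp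
  have hn : q.coeff n ≠ 0 := Finsupp.mem_support_iff.mp (q.coeff.support.max'_mem hsupp)
  have hn1 : q.coeff (n + 1) = 0 :=
    Finsupp.notMem_support_iff.mp fun h => (q.coeff.support.le_max' _ h).not_gt n.lt_succ_self
  have := coeff_xSubMap_succ f q n
  rw [hq, hn1, map_zero, sub_zero] at this
  exact hn (by simpa using this.symm)

lemma single_sub_single_zero_mem_range (i : ℕ) (m : P) :
    single A i m - single A 0 ((f ^ i) m) ∈ LinearMap.range (xSubMap f) := by
  induction i generalizing m with
  | zero => simp
  | succ i ih =>
    have h := add_mem (LinearMap.mem_range_self (xSubMap f) (single A i m)) (ih (f m))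
    rwa [xSubMap_single, ← Module.End.mul_apply, ← pow_succ, sub_add_sub_cancel] at h

lemma sub_single_zero_toAEval'_mem_range (q : PolynomialModule A P) :
    q - single A 0 ((Module.AEval'.of f).symm (toAEval' f q)) ∈ LinearMap.range (xSubMap f) := by
  induction q using induction_linear with
  | zero => simp
  | add a b ha hb =>
    convert add_mem ha hb using 1
    rw [map_add, map_add, single_add]
    abel
  | single i m => simpa [toAEval'_single] using single_sub_single_zero_mem_range f i m

lemma exact_xSubMap_toAEval' : Function.Exact (xSubMap f) (toAEval' f) := by
  intro q
  refine ⟨fun hq => ?_, ?_⟩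
  · simpa [hq] using sub_single_zero_toAEval'_mem_range f q
  · rintro ⟨q, rfl⟩
    exact LinearMap.congr_fun (toAEval'_comp_xSubMap f) q

end PolynomialModule

lemma LocalizedModule.map_bijective_of_exact {R : Type*} [CommSemiring R] (S : Submonoid R)
    {M₀ M₁ M₂ : Type*} [AddCommMonoid M₀] [AddCommMonoid M₁] [AddCommMonoid M₂]
    [Module R M₀] [Module R M₁] [Module R M₂] [Subsingleton (LocalizedModule S M₂)]
    {g : M₀ →ₗ[R] M₁} {h : M₁ →ₗ[R] M₂} (hg : Function.Injective g) (hgh : Function.Exact g h) :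
    Function.Bijective (LocalizedModule.map S g) := by
  refine ⟨LocalizedModule.map_injective S g hg, ?_⟩
  rw [← IsLocalizedModule.map_surjective_iff_localizedModuleMap_surjective
    (LocalizedModule.mkLinearMap S M₀) (LocalizedModule.mkLinearMap S M₁)]
  exact fun y => (LocalizedModule.map_exact S g h hgh y).mp (Subsingleton.elim _ _)

lemma Module.AEval'.subsingleton_localizedModule {A : Type*} [CommRing A] {P : Type*}
    [AddCommGroup P] [Module A P] {f : P →ₗ[A] P} {S : Submonoid A[X]} {p : A[X]} (hpS : p ∈ S)
    (hp : aeval f p = 0) : Subsingleton (LocalizedModule S (Module.AEval' f)) := by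
  rw [LocalizedModule.subsingleton_iff]
  intro m
  refine ⟨p, hpS, ?_⟩
  rw [← (Module.AEval'.of f).apply_symm_apply m, ← Module.AEval.of_aeval_smul, hp]
  simp

theorem stmt1_general (A : Type*) [CommRing A] (P : Type*) [AddCommGroup P] [Module A P]
    (f : P →ₗ[A] P) (S : Submonoid (Polynomial A))
    (htors : ∃ p ∈ S, (Polynomial.aeval f p : P →ₗ[A] P) = 0)
    (g : PolynomialModule A P →ₗ[Polynomial A] PolynomialModule A P)
    (hg : ∀ m, g m = (X : A[X]) • m - PolynomialModule.map A f m) :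
    Subsingleton (LocalizedModule S (Module.AEval' f)) ∧
    Function.Bijective (LocalizedModule.map S g) := by
  obtain ⟨p, hpS, hp⟩ := htors
  have hloc := Module.AEval'.subsingleton_localizedModule hpS hp
  obtain rfl : g = PolynomialModule.xSubMap f := LinearMap.ext hg
  exact ⟨hloc, LocalizedModule.map_bijective_of_exact S (PolynomialModule.xSubMap_injective f)
    (PolynomialModule.exact_xSubMap_toAEval' f)⟩

/-- If `S ⊆ A[X]` is a submonoid of monic polynomials and `f : P → P` is an
`A`-linear endomorphism with `p(f) = 0` for some `p ∈ S`, then the `S`-localization of the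
`A[X]`-module `P_f` is zero, and the map induced on `S`-localizations by
`g(m) = X·m − f̃(m)` on `P[X]` is bijective. -/
theorem stmt1 (A : Type*) [CommRing A] (P : Type*) [AddCommGroup P] [Module A P]
    (f : P →ₗ[A] P) (S : Submonoid (Polynomial A))
    (hS : ∀ p ∈ S, p.Monic)
    (htors : ∃ p ∈ S, (Polynomial.aeval f p : P →ₗ[A] P) = 0)
    (g : PolynomialModule A P →ₗ[Polynomial A] PolynomialModule A P)
    (hg : ∀ m, g m = (X : A[X]) • m - PolynomialModule.map A f m) :
    Subsingleton (LocalizedModule S (Module.AEval' f)) ∧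
    Function.Bijective (LocalizedModule.map S g) :=
  stmt1_general A P f S htors g hg
end

section
/- Let A be a commutative ring, P an A-module, and f : P → P an A-linear endomorphism. Then the A[X]-linear map h : P[X] → P[X], h(m) = m − X·f̃(m), is injective, and its cokernel is isomorphic as an A[X]-module to the localization of P_f at the submonoid of powers of X, equipped with the A[X]-module structure in which X acts as the inverse of the (invertible) localized action of X. -/
/-!
Evaluating at `X⁻¹` gives a map `φ : P[X] → P_f[1/X]`, `Σ Xⁱ pᵢ ↦ Σ pᵢ / Xⁱ`, which is semilinear
along `X ↦ X⁻¹`, surjective, and kills the image of `h` because `φ (X f̃ m) = X⁻¹ X φ m`.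
Modulo the image of `h` one has `Xⁿ p ≡ Xⁿ⁺ᵏ fᵏ p`, so every class is represented by a monomial
`Xⁿ p`; if `p / Xⁿ = 0` in the localization then `fᵏ p = 0` for some `k`, hence `Xⁿ p ≡ 0`.
Injectivity of `h` follows by comparing coefficients of `m = X f̃ m` from degree `0` upwards.
-/

open Polynomial

noncomputable section

namespace PolynomialModule

variable {A : Type*} [CommRing A] {P : Type*} [AddCommGroup P] [Module A P]

theorem coeff_X_smul_zero (u : PolynomialModule A P) : ((X : A[X]) • u).coeff 0 = 0 := by
  simp [← monomial_one_one_eq_X]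

theorem coeff_X_smul_succ (u : PolynomialModule A P) (n : ℕ) :
    ((X : A[X]) • u).coeff (n + 1) = u.coeff n := by
  simp [← monomial_one_one_eq_X]

theorem X_smul_single (n : ℕ) (p : P) : (X : A[X]) • single A n p = single A (n + 1) p := by
  rw [← monomial_one_one_eq_X, monomial_smul_single, one_smul, add_comm]

@[simp]
theorem coeff_map (R' : Type*) {M' : Type*} [CommRing R'] [AddCommGroup M'] [Module R' M']
    [Module A M'] (g : P →ₗ[A] M') (u : PolynomialModule A P) (n : ℕ) :
    (map R' g u).coeff n = g (u.coeff n) :=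
  rfl

theorem eq_zero_of_eq_X_smul_map {f : P →ₗ[A] P} {m : PolynomialModule A P}
    (hm : m = (X : A[X]) • map A f m) : m = 0 := by
  have hcoeff : ∀ n, m.coeff n = 0 := by
    intro n
    induction n with
    | zero => rw [hm, coeff_X_smul_zero]
    | succ n ih => rw [hm, coeff_X_smul_succ, coeff_map, ih, map_zero]
  exact coeff_injective (Finsupp.ext hcoeff)

end PolynomialModule

variable (A : Type*) [CommRing A]

def invX : Localization (Submonoid.powers (X : A[X])) :=
  IsLocalization.mk' _ (1 : A[X]) ⟨X, Submonoid.mem_powers X⟩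

def evalInvX : A[X] →+* Localization (Submonoid.powers (X : A[X])) :=
  eval₂RingHom ((algebraMap A[X] _).comp C) (invX A)

variable {A} {P : Type*} [AddCommGroup P] [Module A P] (f : P →ₗ[A] P)

def toLocalizedAEval : P →ₗ[A] LocalizedModule (Submonoid.powers (X : A[X])) (Module.AEval' f) :=
  ((LocalizedModule.mkLinearMap _ _).restrictScalars A).comp (Module.AEval'.of f).toLinearMap

def evalInvXLocalized : PolynomialModule A P →ₛₗ[evalInvX A]
    LocalizedModule (Submonoid.powers (X : A[X])) (Module.AEval' f) where
  toFun m := PolynomialModule.eval (invX A) (PolynomialModule.map _ (toLocalizedAEval f) m)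
  map_add' := by simp
  map_smul' q m := by
    rw [PolynomialModule.map_smul, PolynomialModule.eval_smul, Polynomial.eval_map,
      IsScalarTower.algebraMap_eq A A[X]]
    rfl

theorem evalInvXLocalized_single (n : ℕ) (p : P) :
    evalInvXLocalized f (PolynomialModule.single A n p) =
      LocalizedModule.mk (Module.AEval'.of f p) (⟨X, Submonoid.mem_powers X⟩ ^ n) := by
  simp only [evalInvXLocalized, LinearMap.coe_mk, AddHom.coe_mk, PolynomialModule.map_single,
    PolynomialModule.eval_single, invX, toLocalizedAEval, ← Localization.mk_eq_mk'_apply,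
    Localization.mk_pow, LinearMap.comp_apply]
  simp [LocalizedModule.mk_smul_mk]

theorem evalInvXLocalized_surjective : Function.Surjective (evalInvXLocalized f) := by
  rintro ⟨p, ⟨_, k, rfl⟩⟩
  refine ⟨PolynomialModule.single A k ((Module.AEval'.of f).symm p), ?_⟩
  rw [evalInvXLocalized_single, LinearEquiv.apply_symm_apply, SubmonoidClass.mk_pow]
  rfl

theorem evalInvXLocalized_X_smul_map (m : PolynomialModule A P) :
    evalInvXLocalized f ((X : A[X]) • PolynomialModule.map A f m) = evalInvXLocalized f m := by
  induction m using PolynomialModule.induction_linear with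
  | zero => simp
  | add m m' hm hm' => simp only [map_add, smul_add, hm, hm']
  | single n p =>
    rw [PolynomialModule.map_single, PolynomialModule.X_smul_single, evalInvXLocalized_single,
      evalInvXLocalized_single, ← Module.AEval'.X_smul_of, pow_succ']
    exact LocalizedModule.mk_cancel_common_left
      (⟨X, Submonoid.mem_powers X⟩ : Submonoid.powers (X : A[X])) _ _

theorem exists_pow_apply_eq_zero_of_evalInvXLocalized_single_eq_zero {n : ℕ} {p : P}
    (hp : evalInvXLocalized f (PolynomialModule.single A n p) = 0) : ∃ k, (f ^ k) p = 0 := by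
  rw [evalInvXLocalized_single, ← LocalizedModule.zero_mk (M := Module.AEval' f) 1,
    LocalizedModule.mk_eq] at hp
  obtain ⟨⟨_, k, rfl⟩, hk⟩ := hp
  simp only [one_smul, smul_zero, Submonoid.smul_def, Module.AEval'.X_pow_smul_of,
    LinearEquiv.map_eq_zero_iff] at hk
  exact ⟨k, hk⟩

section

variable {f} (h : PolynomialModule A P →ₗ[A[X]] PolynomialModule A P)
  (hh : ∀ m, h m = m - (X : A[X]) • PolynomialModule.map A f m)
include hh

theorem single_sub_single_pow_mem_range (n k : ℕ) (p : P) :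
    PolynomialModule.single A n p - PolynomialModule.single A (n + k) ((f ^ k) p) ∈
      LinearMap.range h := by
  induction k with
  | zero => simp
  | succ k ih =>
    have hstep := LinearMap.mem_range_self h (PolynomialModule.single A (n + k) ((f ^ k) p))
    rw [hh, PolynomialModule.map_single, PolynomialModule.X_smul_single] at hstep
    convert add_mem ih hstep using 1
    rw [pow_succ', Module.End.mul_apply, ← add_assoc]
    abel

theorem exists_sub_single_mem_range (m : PolynomialModule A P) :
    ∃ n p, m - PolynomialModule.single A n p ∈ LinearMap.range h := by
  induction m using PolynomialModule.induction_linear with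
  | zero => exact ⟨0, 0, by simp⟩
  | single n p => exact ⟨n, p, by simp⟩
  | add m m' hm hm' =>
    obtain ⟨n, p, hp⟩ := hm
    obtain ⟨n', p', hp'⟩ := hm'
    refine ⟨n + n', (f ^ n') p + (f ^ n) p', ?_⟩
    have hsum := add_mem (add_mem hp (single_sub_single_pow_mem_range h hh n n' p))
      (add_mem hp' (single_sub_single_pow_mem_range h hh n' n p'))
    rw [add_comm n' n] at hsum
    convert hsum using 1
    rw [PolynomialModule.single_add]
    abel

theorem range_eq_ker_evalInvXLocalized :
    LinearMap.range h = LinearMap.ker (evalInvXLocalized f) := by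
  have hle : LinearMap.range h ≤ LinearMap.ker (evalInvXLocalized f) := by
    rintro _ ⟨m, rfl⟩
    rw [LinearMap.mem_ker, hh, map_sub, evalInvXLocalized_X_smul_map, sub_self]
  refine le_antisymm hle fun m hm => ?_
  obtain ⟨n, p, hp⟩ := exists_sub_single_mem_range h hh m
  have hsingle : evalInvXLocalized f (PolynomialModule.single A n p) = 0 := by
    have := hle hp
    rwa [LinearMap.mem_ker, map_sub, LinearMap.mem_ker.mp hm, zero_sub, neg_eq_zero] at this
  obtain ⟨k, hk⟩ := exists_pow_apply_eq_zero_of_evalInvXLocalized_single_eq_zero f hsingle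
  have hzero := single_sub_single_pow_mem_range h hh n k p
  rw [hk, PolynomialModule.single_zero, sub_zero] at hzero
  simpa using add_mem hp hzero

end

end

/-- The map `h(m) = m − X·f̃(m)` on `P[X]` is injective, and its cokernel is
isomorphic, as an `A[X]`-module, to the localization of `P_f` at the powers of `X` with `X`
acting as the inverse of the (invertible) localized action of `X`.  The twisted action of
`q ∈ A[X]` is encoded by the ring homomorphism `ψ : A[X] → A[X][1/X]` fixing `A` and
sending `X` to the inverse of `X`; the isomorphism is an additive bijection `e` satisfying
`e (q • m) = ψ(q) • e m`. -/
theorem stmt3 (A : Type*) [CommRing A] (P : Type*) [AddCommGroup P] [Module A P]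
    (f : P →ₗ[A] P)
    (h : PolynomialModule A P →ₗ[Polynomial A] PolynomialModule A P)
    (hh : ∀ m, h m = m - (X : A[X]) • (PolynomialModule.map A f m)) :
    Function.Injective h ∧
    ∃ e : (PolynomialModule A P ⧸ LinearMap.range h) ≃+
        LocalizedModule (Submonoid.powers (X : A[X])) (Module.AEval' f),
      ∀ (q : Polynomial A) (m : PolynomialModule A P ⧸ LinearMap.range h),
        e (q • m) =
          (Polynomial.eval₂RingHom
              ((algebraMap (Polynomial A)
                  (Localization (Submonoid.powers (X : A[X])))).comp Polynomial.C)
              (IsLocalization.mk' (Localization (Submonoid.powers (X : A[X])))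
                (1 : Polynomial A) ⟨X, Submonoid.mem_powers X⟩) q) • e m := by
  have hrange := range_eq_ker_evalInvXLocalized h hh
  let e := (LinearMap.range h).liftQ (evalInvXLocalized f) hrange.le
  have he : Function.Bijective e := by
    refine ⟨LinearMap.ker_eq_bot.mp (Submodule.ker_liftQ_eq_bot' _ _ hrange), fun y => ?_⟩
    obtain ⟨m, rfl⟩ := evalInvXLocalized_surjective f y
    exact ⟨Submodule.Quotient.mk m, rfl⟩
  refine ⟨(injective_iff_map_eq_zero h).mpr fun m hm => ?_, AddEquiv.ofBijective e he,
    e.map_smulₛₗ⟩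
  exact PolynomialModule.eq_zero_of_eq_X_smul_map (sub_eq_zero.mp ((hh m).symm.trans hm))
end
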